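/- arXiv:2602.22501 — 2 statements merged into one kernel-verified Lean document; each statement's English description precedes it below -/
import Mathlib

section
/- Let U be an open subset of the half-plane {(ρ,z) ∈ ℝ² : ρ > 0} and let σ, ω : U → ℝ be twice continuously differentiable functions satisfying the reduced vacuum Einstein equations Δσ = −e^{−2σ}(ω_ρ² + ω_z²)/ρ⁴ and Δω = 4ω_ρ/ρ + 2(ω_ρσ_ρ + ω_zσ_z) on U. Set η = ρ²e^σ and define G(ρ,z) = (ρ/(4η²))(η_ρ² − η_z² + ω_ρ² − ω_z²) and H(ρ,z) = (ρ/(2η²))(η_ρη_z + ω_ρω_z). Then the 1-form G dρ + H dz is closed on U, i.e. ∂_z G = ∂_ρ H at every point of U. -/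
/-- Partial derivative with respect to the first (ρ) variable. -/
noncomputable def pdr (f : ℝ × ℝ → ℝ) (p : ℝ × ℝ) : ℝ :=
  deriv (fun x => f (x, p.2)) p.1

/-- Partial derivative with respect to the second (z) variable. -/
noncomputable def pdz (f : ℝ × ℝ → ℝ) (p : ℝ × ℝ) : ℝ :=
  deriv (fun y => f (p.1, y)) p.2

/-- The flat cylindrically symmetric Laplacian Δ = ∂²_ρ + (1/ρ)∂_ρ + ∂²_z. -/
noncomputable def lap (f : ℝ × ℝ → ℝ) (p : ℝ × ℝ) : ℝ :=
  pdr (pdr f) p + pdr f p / p.1 + pdz (pdz f) p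

/-! The 1-form is closed because of an identity valid for all C² pairs (σ, ω), not only for
solutions: writing the form through σ (using η_ρ = η (2/ρ + σ_ρ), η_z = η σ_z and
ρ/η² = e^{−2σ}/ρ³) and commuting the mixed partials,
∂_ρ H − ∂_z G = (ρ/2) σ_z (Δσ + e^{−2σ}|∇ω|²/ρ⁴) + (e^{−2σ}/(2ρ³)) ω_z (Δω − 4ω_ρ/ρ − 2∇σ·∇ω),
and both brackets vanish by the field equations. -/

open Real Filter Topology

section PartialDerivatives

variable {f g : ℝ × ℝ → ℝ} {p : ℝ × ℝ}

lemma hasDerivAt_pdr (hf : DifferentiableAt ℝ f p) :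
    HasDerivAt (fun x => f (x, p.2)) (pdr f p) p.1 :=
  (hf.comp p.1 (differentiableAt_id.prodMk (differentiableAt_const p.2))).hasDerivAt

lemma hasDerivAt_pdz (hf : DifferentiableAt ℝ f p) :
    HasDerivAt (fun y => f (p.1, y)) (pdz f p) p.2 :=
  (hf.comp p.2 ((differentiableAt_const p.1).prodMk differentiableAt_id)).hasDerivAt

lemma pdr_eq_fderiv (hf : DifferentiableAt ℝ f p) : pdr f p = fderiv ℝ f p (1, 0) :=
  (hf.hasFDerivAt.comp_hasDerivAt p.1
    ((hasDerivAt_id p.1).prodMk (hasDerivAt_const p.1 p.2))).deriv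

lemma pdz_eq_fderiv (hf : DifferentiableAt ℝ f p) : pdz f p = fderiv ℝ f p (0, 1) :=
  (hf.hasFDerivAt.comp_hasDerivAt p.2
    ((hasDerivAt_const p.2 p.1).prodMk (hasDerivAt_id p.2))).deriv

lemma pdr_congr_of_eqOn {U : Set (ℝ × ℝ)} (hU : IsOpen U) (hfg : Set.EqOn f g U) (hp : p ∈ U) :
    pdr f p = pdr g p := by
  have hline : ∀ᶠ x in 𝓝 p.1, (x, p.2) ∈ U :=
    (continuous_id.prodMk continuous_const).continuousAt.preimage_mem_nhds (hU.mem_nhds hp)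
  exact EventuallyEq.deriv_eq (hline.mono fun x hx => hfg hx)

lemma pdz_congr_of_eqOn {U : Set (ℝ × ℝ)} (hU : IsOpen U) (hfg : Set.EqOn f g U) (hp : p ∈ U) :
    pdz f p = pdz g p := by
  have hline : ∀ᶠ y in 𝓝 p.2, (p.1, y) ∈ U :=
    (continuous_const.prodMk continuous_id).continuousAt.preimage_mem_nhds (hU.mem_nhds hp)
  exact EventuallyEq.deriv_eq (hline.mono fun y hy => hfg hy)

lemma ContDiffAt.pdr_eventuallyEq (hf : ContDiffAt ℝ 2 f p) :
    pdr f =ᶠ[𝓝 p] fun q => fderiv ℝ f q (1, 0) :=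
  (hf.eventually (by simp)).mono fun _ hq => pdr_eq_fderiv (hq.differentiableAt (by simp))

lemma ContDiffAt.pdz_eventuallyEq (hf : ContDiffAt ℝ 2 f p) :
    pdz f =ᶠ[𝓝 p] fun q => fderiv ℝ f q (0, 1) :=
  (hf.eventually (by simp)).mono fun _ hq => pdz_eq_fderiv (hq.differentiableAt (by simp))

lemma ContDiffAt.differentiableAt_fderiv (hf : ContDiffAt ℝ 2 f p) :
    DifferentiableAt ℝ (fderiv ℝ f) p :=
  (hf.fderiv_right (m := 1) (by norm_num)).differentiableAt (by simp)

lemma ContDiffAt.differentiableAt_pdr (hf : ContDiffAt ℝ 2 f p) :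
    DifferentiableAt ℝ (pdr f) p :=
  (hf.differentiableAt_fderiv.clm_apply (differentiableAt_const _)).congr_of_eventuallyEq
    hf.pdr_eventuallyEq

lemma ContDiffAt.differentiableAt_pdz (hf : ContDiffAt ℝ 2 f p) :
    DifferentiableAt ℝ (pdz f) p :=
  (hf.differentiableAt_fderiv.clm_apply (differentiableAt_const _)).congr_of_eventuallyEq
    hf.pdz_eventuallyEq

lemma ContDiffAt.pdz_pdr_eq_pdr_pdz (hf : ContDiffAt ℝ 2 f p) :
    pdz (pdr f) p = pdr (pdz f) p := by
  have hF := hf.differentiableAt_fderiv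
  rw [pdz_eq_fderiv hf.differentiableAt_pdr, pdr_eq_fderiv hf.differentiableAt_pdz,
    hf.pdr_eventuallyEq.fderiv_eq, hf.pdz_eventuallyEq.fderiv_eq,
    fderiv_clm_apply hF (differentiableAt_const _), fderiv_clm_apply hF (differentiableAt_const _)]
  simpa using (hf.isSymmSndFDerivAt (by simp)) (0, 1) (1, 0)

end PartialDerivatives

section Einstein

variable {σ ω : ℝ × ℝ → ℝ} {p : ℝ × ℝ}

noncomputable def weylEta (σ : ℝ × ℝ → ℝ) (p : ℝ × ℝ) : ℝ := p.1 ^ 2 * exp (σ p)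

noncomputable def gammaRho (σ ω : ℝ × ℝ → ℝ) (p : ℝ × ℝ) : ℝ :=
  p.1 / 4 * ((2 / p.1 + pdr σ p) ^ 2 - pdz σ p ^ 2)
    + exp (-2 * σ p) / (4 * p.1 ^ 3) * (pdr ω p ^ 2 - pdz ω p ^ 2)

noncomputable def gammaZ (σ ω : ℝ × ℝ → ℝ) (p : ℝ × ℝ) : ℝ :=
  p.1 / 2 * ((2 / p.1 + pdr σ p) * pdz σ p)
    + exp (-2 * σ p) / (2 * p.1 ^ 3) * (pdr ω p * pdz ω p)

lemma pdr_weylEta (hσ : DifferentiableAt ℝ σ p) :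
    pdr (weylEta σ) p = 2 * p.1 * exp (σ p) + p.1 ^ 2 * exp (σ p) * pdr σ p := by
  have h := (hasDerivAt_pow 2 p.1).mul (hasDerivAt_pdr hσ).exp
  refine h.deriv.trans ?_
  simp only [Prod.mk.eta]
  ring

lemma pdz_weylEta (hσ : DifferentiableAt ℝ σ p) :
    pdz (weylEta σ) p = p.1 ^ 2 * exp (σ p) * pdz σ p := by
  have h := (hasDerivAt_pdz hσ).exp.const_mul (p.1 ^ 2)
  refine h.deriv.trans ?_
  simp only [Prod.mk.eta]
  ring

lemma exp_neg_two_mul_eq_inv_sq (x : ℝ) : exp (-2 * x) = (exp x)⁻¹ ^ 2 := by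
  rw [← exp_neg, ← exp_nat_mul]
  ring_nf

lemma div_weylEta_sq_mul_eq_gammaRho (hσ : DifferentiableAt ℝ σ p) (hp : p.1 ≠ 0) :
    p.1 / (4 * weylEta σ p ^ 2) * (pdr (weylEta σ) p ^ 2 - pdz (weylEta σ) p ^ 2
      + pdr ω p ^ 2 - pdz ω p ^ 2) = gammaRho σ ω p := by
  rw [pdr_weylEta hσ, pdz_weylEta hσ, gammaRho, weylEta, exp_neg_two_mul_eq_inv_sq]
  field_simp
  ring

lemma div_weylEta_sq_mul_eq_gammaZ (hσ : DifferentiableAt ℝ σ p) (hp : p.1 ≠ 0) :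
    p.1 / (2 * weylEta σ p ^ 2) * (pdr (weylEta σ) p * pdz (weylEta σ) p
      + pdr ω p * pdz ω p) = gammaZ σ ω p := by
  rw [pdr_weylEta hσ, pdz_weylEta hσ, gammaZ, weylEta, exp_neg_two_mul_eq_inv_sq]
  field_simp

lemma pdz_gammaRho (hσ : ContDiffAt ℝ 2 σ p) (hω : ContDiffAt ℝ 2 ω p) :
    pdz (gammaRho σ ω) p =
      p.1 / 2 * ((2 / p.1 + pdr σ p) * pdz (pdr σ) p - pdz σ p * pdz (pdz σ) p)
        + exp (-2 * σ p) / (4 * p.1 ^ 3) * (-2 * pdz σ p * (pdr ω p ^ 2 - pdz ω p ^ 2)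
          + 2 * (pdr ω p * pdz (pdr ω) p - pdz ω p * pdz (pdz ω) p)) := by
  have h := ((((hasDerivAt_pdz hσ.differentiableAt_pdr).const_add (2 / p.1)).pow 2).sub
      ((hasDerivAt_pdz hσ.differentiableAt_pdz).pow 2)).const_mul (p.1 / 4) |>.add
    (((((hasDerivAt_pdz (hσ.differentiableAt (by simp))).const_mul (-2)).exp).div_const
      (4 * p.1 ^ 3)).mul (((hasDerivAt_pdz hω.differentiableAt_pdr).pow 2).sub
        ((hasDerivAt_pdz hω.differentiableAt_pdz).pow 2)))
  refine h.deriv.trans ?_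
  simp only [Prod.mk.eta, Pi.pow_apply, Pi.sub_apply]
  ring

lemma pdr_gammaZ (hσ : ContDiffAt ℝ 2 σ p) (hω : ContDiffAt ℝ 2 ω p) (hp : p.1 ≠ 0) :
    pdr (gammaZ σ ω) p =
      (2 / p.1 + pdr σ p) * pdz σ p / 2
        + p.1 / 2 * ((-2 / p.1 ^ 2 + pdr (pdr σ) p) * pdz σ p
          + (2 / p.1 + pdr σ p) * pdr (pdz σ) p)
        + exp (-2 * σ p) / (2 * p.1 ^ 3) * ((-2 * pdr σ p - 3 / p.1) * pdr ω p * pdz ω p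
          + pdr (pdr ω) p * pdz ω p + pdr ω p * pdr (pdz ω) p) := by
  have h := (((hasDerivAt_id p.1).div_const 2).mul
      ((((hasDerivAt_const p.1 (2 : ℝ)).div (hasDerivAt_id p.1) hp).add
        (hasDerivAt_pdr hσ.differentiableAt_pdr)).mul (hasDerivAt_pdr hσ.differentiableAt_pdz))).add
    (((((hasDerivAt_pdr (hσ.differentiableAt (by simp))).const_mul (-2)).exp).div
      ((hasDerivAt_pow 3 p.1).const_mul (2 : ℝ)) (by positivity)).mul
        ((hasDerivAt_pdr hω.differentiableAt_pdr).mul (hasDerivAt_pdr hω.differentiableAt_pdz)))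
  refine h.deriv.trans ?_
  simp only [Prod.mk.eta, Pi.add_apply, Pi.mul_apply, Pi.div_apply, id]
  field_simp
  ring

lemma pdr_gammaZ_sub_pdz_gammaRho (hσ : ContDiffAt ℝ 2 σ p) (hω : ContDiffAt ℝ 2 ω p)
    (hp : p.1 ≠ 0) :
    pdr (gammaZ σ ω) p - pdz (gammaRho σ ω) p =
      p.1 / 2 * pdz σ p * (lap σ p + exp (-2 * σ p) * (pdr ω p ^ 2 + pdz ω p ^ 2) / p.1 ^ 4)
        + exp (-2 * σ p) / (2 * p.1 ^ 3) * pdz ω p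
          * (lap ω p - 4 * pdr ω p / p.1 - 2 * (pdr ω p * pdr σ p + pdz ω p * pdz σ p)) := by
  rw [pdr_gammaZ hσ hω hp, pdz_gammaRho hσ hω, hσ.pdz_pdr_eq_pdr_pdz, hω.pdz_pdr_eq_pdr_pdz, lap,
    lap]
  field_simp
  ring

end Einstein

/-- for a C² solution (σ, ω) of the reduced vacuum Einstein equations
on an open subset of the half-plane {ρ > 0}, the 1-form G dρ + H dz defining the
conformal factor function γ is closed: ∂_z G = ∂_ρ H. -/
theorem closedness_of_gamma_oneform
    (U : Set (ℝ × ℝ)) (hU : IsOpen U) (hUpos : ∀ p ∈ U, 0 < p.1)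
    (σ ω : ℝ × ℝ → ℝ)
    (hσ : ContDiffOn ℝ 2 σ U) (hω : ContDiffOn ℝ 2 ω U)
    (heqσ : ∀ p ∈ U, lap σ p =
      - Real.exp (-2 * σ p) * ((pdr ω p) ^ 2 + (pdz ω p) ^ 2) / p.1 ^ 4)
    (heqω : ∀ p ∈ U, lap ω p =
      4 * pdr ω p / p.1 + 2 * (pdr ω p * pdr σ p + pdz ω p * pdz σ p))
    (η G H : ℝ × ℝ → ℝ)
    (hη : ∀ p, η p = p.1 ^ 2 * Real.exp (σ p))
    (hG : ∀ p, G p = p.1 / (4 * (η p) ^ 2)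
        * ((pdr η p) ^ 2 - (pdz η p) ^ 2 + (pdr ω p) ^ 2 - (pdz ω p) ^ 2))
    (hH : ∀ p, H p = p.1 / (2 * (η p) ^ 2) * (pdr η p * pdz η p + pdr ω p * pdz ω p)) :
    ∀ p ∈ U, pdz G p = pdr H p := by
  obtain rfl : η = weylEta σ := funext hη
  have hσU : ∀ q ∈ U, ContDiffAt ℝ 2 σ q := fun q hq => hσ.contDiffAt (hU.mem_nhds hq)
  have hωU : ∀ q ∈ U, ContDiffAt ℝ 2 ω q := fun q hq => hω.contDiffAt (hU.mem_nhds hq)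
  have hGU : Set.EqOn G (gammaRho σ ω) U := fun q hq => by
    rw [hG, div_weylEta_sq_mul_eq_gammaRho ((hσU q hq).differentiableAt (by simp)) (hUpos q hq).ne']
  have hHU : Set.EqOn H (gammaZ σ ω) U := fun q hq => by
    rw [hH, div_weylEta_sq_mul_eq_gammaZ ((hσU q hq).differentiableAt (by simp)) (hUpos q hq).ne']
  intro p hp
  rw [pdz_congr_of_eqOn hU hGU hp, pdr_congr_of_eqOn hU hHU hp, eq_comm, ← sub_eq_zero,
    pdr_gammaZ_sub_pdz_gammaRho (hσU p hp) (hωU p hp) (hUpos p hp).ne', heqσ p hp, heqω p hp]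
  ring
end

section
/- Let w ≠ 0, b ∈ ℝ and ε ∈ {1, −1}. On the open set U = {(ρ,z) ∈ ℝ² : ρ > 0 and ε ln ρ + b > 0}, define η(ρ) = ρ |w| (ε ln ρ + b), σ = ln(η/ρ²), and ω(ρ,z) = w z. Then (σ, ω) satisfies the reduced vacuum Einstein equations Δσ = −e^{−2σ}(ω_ρ² + ω_z²)/ρ⁴ and Δω = 4ω_ρ/ρ + 2(ω_ρσ_ρ + ω_zσ_z) on U. -/
/-!
Both fields separate: `σ = log (|w| (ε log ρ + b) / ρ)` depends on `ρ` only and `ω = w z` on `z`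
only. With `g = ε log ρ + b` one finds `σ_ρ = (ε - g) / (ρ g)` and `σ_ρρ + σ_ρ / ρ = -ε² / (ρ g)²`,
while `e^{-2σ} w² / ρ⁴ = 1 / (ρ g)²`, so the first equation is `ε² = 1`. The second reads `0 = 0`,
because `ω_ρ = σ_z = ω_zz = 0`.
-/

open Real Filter Topology

section SeparatedVariables

variable (g : ℝ → ℝ) (p : ℝ × ℝ)

@[simp] lemma pdr_comp_fst : pdr (g ∘ Prod.fst) p = deriv g p.1 := rfl

@[simp] lemma pdz_comp_fst : pdz (g ∘ Prod.fst) p = 0 := deriv_const p.2 (g p.1)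

@[simp] lemma pdr_comp_snd : pdr (g ∘ Prod.snd) p = 0 := deriv_const p.1 (g p.2)

@[simp] lemma pdz_comp_snd : pdz (g ∘ Prod.snd) p = deriv g p.2 := rfl

lemma lap_comp_fst : lap (g ∘ Prod.fst) p = deriv (deriv g) p.1 + deriv g p.1 / p.1 := by
  have hpdr : pdr (g ∘ Prod.fst) = deriv g ∘ Prod.fst := funext (pdr_comp_fst g)
  have hpdz : pdz (g ∘ Prod.fst) = (fun _ => 0) ∘ Prod.fst := funext (pdz_comp_fst g)
  simp [lap, hpdr, hpdz]

lemma lap_comp_snd : lap (g ∘ Prod.snd) p = deriv (deriv g) p.2 := by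
  have hpdr : pdr (g ∘ Prod.snd) = (fun _ => 0) ∘ Prod.snd := funext (pdr_comp_snd g)
  have hpdz : pdz (g ∘ Prod.snd) = deriv g ∘ Prod.snd := funext (pdz_comp_snd g)
  simp [lap, hpdr, hpdz]

end SeparatedVariables

section LewisProfile

variable {c ε b t : ℝ}

-- Also true at `t = 0`, where both sides are junk `_ / 0 = 0`.
lemma mul_mul_div_sq_eq_mul_div (t a d : ℝ) : t * a * d / t ^ 2 = a * d / t := by
  rcases eq_or_ne t 0 with rfl | ht
  · simp
  · field_simp

lemma hasDerivAt_log_const_mul_log_add_div (hc : c ≠ 0) (ht : t ≠ 0) (hg : ε * log t + b ≠ 0) :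
    HasDerivAt (fun s => log (c * (ε * log s + b) / s))
      ((ε - (ε * log t + b)) / (t * (ε * log t + b))) t := by
  have hlog := ((hasDerivAt_log ht).const_mul ε).add_const b
  have hquot : HasDerivAt (fun s => c * (ε * log s + b) / s) _ t :=
    (hlog.const_mul c).div (hasDerivAt_id' t) ht
  refine (hquot.log (by simp [hc, hg, ht])).congr_deriv ?_
  field_simp

lemma deriv_log_const_mul_log_add_div_eventuallyEq (hc : c ≠ 0) (ht : t ≠ 0)
    (hg : ε * log t + b ≠ 0) :
    deriv (fun s => log (c * (ε * log s + b) / s))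
      =ᶠ[𝓝 t] fun s => (ε - (ε * log s + b)) / (s * (ε * log s + b)) := by
  have hcont : ContinuousAt (fun s => ε * log s + b) t := by fun_prop (disch := exact ht)
  filter_upwards [eventually_ne_nhds ht, hcont.eventually_ne hg] with s hs hgs
  exact (hasDerivAt_log_const_mul_log_add_div hc hs hgs).deriv

lemma hasDerivAt_sub_log_add_div (ht : t ≠ 0) (hg : ε * log t + b ≠ 0) :
    HasDerivAt (fun s => (ε - (ε * log s + b)) / (s * (ε * log s + b)))
      (((ε * log t + b) ^ 2 - ε * (ε * log t + b) - ε ^ 2) / (t * (ε * log t + b)) ^ 2) t := by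
  have hlog := ((hasDerivAt_log ht).const_mul ε).add_const b
  have hquot : HasDerivAt (fun s => (ε - (ε * log s + b)) / (s * (ε * log s + b))) _ t :=
    (hlog.const_sub ε).div ((hasDerivAt_id' t).mul hlog) (mul_ne_zero ht hg)
  refine hquot.congr_deriv ?_
  field_simp
  ring

lemma radial_laplacian_log_const_mul_log_add_div (hc : c ≠ 0) (ht : t ≠ 0)
    (hg : ε * log t + b ≠ 0) :
    deriv (deriv fun s => log (c * (ε * log s + b) / s)) t
      + deriv (fun s => log (c * (ε * log s + b) / s)) t / t
      = -(ε / (t * (ε * log t + b))) ^ 2 := by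
  rw [(deriv_log_const_mul_log_add_div_eventuallyEq hc ht hg).deriv_eq,
    (hasDerivAt_sub_log_add_div ht hg).deriv, (hasDerivAt_log_const_mul_log_add_div hc ht hg).deriv]
  field_simp
  ring

end LewisProfile

/-- the Lewis family (II±), with η = ρ|w|(±ln ρ + b) and
ω = wz, satisfies the reduced vacuum Einstein equations on the open set where
ρ > 0 and ±ln ρ + b > 0. -/
theorem lewis_II_solves_reduced_einstein
    (w b ε : ℝ) (hw : w ≠ 0) (hε : ε = 1 ∨ ε = -1)
    (η σ ω : ℝ × ℝ → ℝ)
    (hη : ∀ p : ℝ × ℝ, η p = p.1 * |w| * (ε * Real.log p.1 + b))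
    (hσ : ∀ p : ℝ × ℝ, σ p = Real.log (η p / p.1 ^ 2))
    (hω : ∀ p : ℝ × ℝ, ω p = w * p.2) :
    ∀ p : ℝ × ℝ, 0 < p.1 → 0 < ε * Real.log p.1 + b →
      lap σ p = - Real.exp (-2 * σ p) * ((pdr ω p) ^ 2 + (pdz ω p) ^ 2) / p.1 ^ 4
      ∧ lap ω p = 4 * pdr ω p / p.1
          + 2 * (pdr ω p * pdr σ p + pdz ω p * pdz σ p) := by
  intro p hρ hg
  obtain rfl : σ = (fun s => log (|w| * (ε * log s + b) / s)) ∘ Prod.fst :=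
    funext fun q => by rw [hσ, hη, mul_mul_div_sq_eq_mul_div]; rfl
  obtain rfl : ω = (w * ·) ∘ Prod.snd := funext hω
  have hdω : deriv (w * ·) = fun _ => w := by simp
  have hexp : exp (-2 * log (|w| * (ε * log p.1 + b) / p.1))
      = ((|w| * (ε * log p.1 + b) / p.1) ^ 2)⁻¹ := by
    rw [← exp_log (x := (_ ^ 2)⁻¹) (by positivity), log_inv, log_pow]
    ring_nf
  have hε2 : ε ^ 2 = 1 := by rcases hε with rfl | rfl <;> norm_num
  constructor
  · rw [lap_comp_fst, radial_laplacian_log_const_mul_log_add_div (abs_ne_zero.2 hw) hρ.ne' hg.ne']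
    simp only [Function.comp_apply, hexp, pdr_comp_snd, pdz_comp_snd, hdω]
    field_simp
    rw [sq_abs, hε2]
    ring
  · simp [lap_comp_snd]
end
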